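/- arXiv:1704.05193 — 4 statements merged into one kernel-verified Lean document; each statement's English description precedes it below -/
import Mathlib

section
/- Let n ≥ 3 and let L be a real symmetric positive semidefinite n×n matrix with L𝟙 = 0 (e.g., the Laplacian matrix of a connected graph), such that λ_{n−1}(L) > 0 and λ_{n−2}(L) > λ_{n−1}(L). Let i ≠ j be indices in {1,…,n} and let a = e_i − e_j, where e_i denotes the i-th standard basis vector of ℝⁿ. Let v ∈ ℝⁿ be a unit vector with Lv = λ_{n−1}(L)·v and vᵀ𝟙 = 0. Then λ_{n−1}(L + aaᵀ) − λ_{n−1}(L) ≥ (aᵀv)² / ( 6/(λ_{n−2}(L) − λ_{n−1}(L)) + 1 ). -/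
/-!
Let `u` be a unit eigenvector of `M = L + a aᵀ` for `θ = λ_{n-1}(M)`. The kernel of `M ⪰ L` lies
in the one-dimensional kernel of `L`, so `θ > 0` and hence `u ⊥ 𝟙`. With `c = ⟨u, v⟩`, the spectral
expansion of `L` gives `θ = uᵀ L u + (aᵀu)² ≥ λ c² + μ (1 - c²) + (aᵀu)²`, where `λ < μ` are the
second and third smallest eigenvalues of `L`. Since `|v - c u|² = 1 - c²` and `|a|² = 2`,
Cauchy–Schwarz gives `(aᵀv - c aᵀu)² ≤ 2 (1 - c²)`. Eliminating `c` and `aᵀu` between these two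
inequalities yields `(μ - λ) (aᵀv)² ≤ (μ - λ + 2) (θ - λ)`.
-/

open Matrix

/-- Eigenvalues of a Hermitian matrix sorted in ascending order:
`eigAsc hM 0` is the smallest eigenvalue and `eigAsc hM (n-1)` the largest. -/
noncomputable def eigAsc {n : ℕ} {M : Matrix (Fin n) (Fin n) ℝ} (hM : M.IsHermitian) : Fin n → ℝ :=
  hM.eigenvalues ∘ Tuple.sort hM.eigenvalues

/-- The ℓ² operator (spectral) norm of a real square matrix. -/
noncomputable def specNorm {n : ℕ} (M : Matrix (Fin n) (Fin n) ℝ) : ℝ :=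
  ‖Matrix.toEuclideanCLM (𝕜 := ℝ) M‖

/-- A real square matrix is doubly stochastic if its entries are nonnegative and
all row sums and column sums equal one. -/
def DoublyStochastic {n : ℕ} (M : Matrix (Fin n) (Fin n) ℝ) : Prop :=
  (∀ i j, 0 ≤ M i j) ∧ (∀ i, ∑ j, M i j = 1) ∧ (∀ j, ∑ i, M i j = 1)

/-- The matrix `J = (1/n) 𝟙𝟙ᵀ` with all entries equal to `1/n`. -/
noncomputable def Jmat (n : ℕ) : Matrix (Fin n) (Fin n) ℝ := Matrix.of fun _ _ => (n : ℝ)⁻¹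

namespace Matrix.IsHermitian

variable {n : ℕ} {A : Matrix (Fin n) (Fin n) ℝ}

lemma dotProduct_mulVec_comm (hA : A.IsHermitian) (x y : Fin n → ℝ) :
    x ⬝ᵥ A *ᵥ y = A *ᵥ x ⬝ᵥ y := by
  rw [dotProduct_mulVec, ← mulVec_transpose, ← conjTranspose_eq_transpose_of_trivial, hA.eq,
    dotProduct_comm]

lemma dotProduct_eq_zero_of_mulVec_eq_smul (hA : A.IsHermitian) {x y : Fin n → ℝ} {c d : ℝ}
    (hx : A *ᵥ x = c • x) (hy : A *ᵥ y = d • y) (hcd : c ≠ d) : x ⬝ᵥ y = 0 := by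
  have h := hA.dotProduct_mulVec_comm x y
  rw [hx, hy, dotProduct_smul, smul_dotProduct, smul_eq_mul, smul_eq_mul] at h
  exact (mul_eq_mul_right_iff.mp h.symm).resolve_left hcd

variable (hA : A.IsHermitian)

noncomputable def eigvecAsc (k : Fin n) : Fin n → ℝ :=
  ⇑(hA.eigenvectorBasis (Tuple.sort hA.eigenvalues k))

lemma monotone_eigAsc : Monotone (eigAsc hA) := Tuple.monotone_sort _

lemma mulVec_eigvecAsc (k : Fin n) : A *ᵥ hA.eigvecAsc k = eigAsc hA k • hA.eigvecAsc k :=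
  hA.mulVec_eigenvectorBasis _

lemma eigvecAsc_dotProduct_eigvecAsc (k l : Fin n) :
    hA.eigvecAsc k ⬝ᵥ hA.eigvecAsc l = if k = l then 1 else 0 := by
  have h := orthonormal_iff_ite.mp hA.eigenvectorBasis.orthonormal
    (Tuple.sort hA.eigenvalues k) (Tuple.sort hA.eigenvalues l)
  simp only [PiLp.inner_apply, RCLike.inner_apply, conj_trivial,
    (Tuple.sort hA.eigenvalues).injective.eq_iff] at h
  rw [← h, eigvecAsc, eigvecAsc, dotProduct]
  exact Finset.sum_congr rfl fun _ _ => mul_comm _ _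

lemma dotProduct_eq_sum_eigvecAsc (x y : Fin n → ℝ) :
    x ⬝ᵥ y = ∑ k, (hA.eigvecAsc k ⬝ᵥ x) * (hA.eigvecAsc k ⬝ᵥ y) := by
  have h := hA.eigenvectorBasis.sum_inner_mul_inner (WithLp.toLp 2 x) (WithLp.toLp 2 y)
  simp only [PiLp.inner_apply, RCLike.inner_apply, conj_trivial] at h
  simp only [eigvecAsc]
  rw [Equiv.sum_comp (Tuple.sort hA.eigenvalues)
    (fun k => (⇑(hA.eigenvectorBasis k) ⬝ᵥ x) * (⇑(hA.eigenvectorBasis k) ⬝ᵥ y))]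
  simp_rw [mul_comm (y _)] at h
  exact h.symm

lemma dotProduct_mulVec_eq_sum_eigAsc (x : Fin n → ℝ) :
    x ⬝ᵥ A *ᵥ x = ∑ k, eigAsc hA k * (hA.eigvecAsc k ⬝ᵥ x) ^ 2 := by
  rw [hA.dotProduct_eq_sum_eigvecAsc x]
  refine Finset.sum_congr rfl fun k _ => ?_
  rw [hA.dotProduct_mulVec_comm, hA.mulVec_eigvecAsc, smul_dotProduct, smul_eq_mul]
  ring

lemma exists_eigAsc_eq_of_mulVec_eq_smul {z : Fin n → ℝ} {c : ℝ} (hz : z ≠ 0)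
    (h : A *ᵥ z = c • z) : ∃ k, eigAsc hA k = c := by
  by_contra! hne
  refine hz (dotProduct_self_eq_zero.mp ?_)
  rw [hA.dotProduct_eq_sum_eigvecAsc]
  exact Finset.sum_eq_zero fun k _ => by
    rw [hA.dotProduct_eq_zero_of_mulVec_eq_smul (hA.mulVec_eigvecAsc k) h (hne k), mul_zero]

/-- If `c` occurs in the spectrum at most at the index `k`, every eigenvector for `c` is a
multiple of `eigvecAsc k`. -/
lemma dotProduct_eq_mul_of_eigAsc_eq_imp {z : Fin n → ℝ} {c : ℝ} {k : Fin n}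
    (h : A *ᵥ z = c • z) (hk : ∀ l, eigAsc hA l = c → l = k) (x : Fin n → ℝ) :
    x ⬝ᵥ z = (hA.eigvecAsc k ⬝ᵥ x) * (hA.eigvecAsc k ⬝ᵥ z) := by
  rw [hA.dotProduct_eq_sum_eigvecAsc]
  refine Finset.sum_eq_single k (fun l _ hl => ?_) (by simp)
  rw [hA.dotProduct_eq_zero_of_mulVec_eq_smul (hA.mulVec_eigvecAsc l) h
    (fun hc => hl (hk l hc)), mul_zero]

lemma sq_dotProduct_eq_of_eigAsc_eq_imp {z z' : Fin n → ℝ} {c : ℝ} {k : Fin n}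
    (h : A *ᵥ z = c • z) (h' : A *ᵥ z' = c • z') (hk : ∀ l, eigAsc hA l = c → l = k) :
    (z ⬝ᵥ z') ^ 2 = (z ⬝ᵥ z) * (z' ⬝ᵥ z') := by
  rw [hA.dotProduct_eq_mul_of_eigAsc_eq_imp h' hk z, hA.dotProduct_eq_mul_of_eigAsc_eq_imp h hk z,
    hA.dotProduct_eq_mul_of_eigAsc_eq_imp h' hk z']
  ring

lemma eigvecAsc_dotProduct_eq_zero {z x : Fin n → ℝ} {c : ℝ} {k : Fin n} (hz : z ≠ 0)
    (h : A *ᵥ z = c • z) (hk : ∀ l, eigAsc hA l = c → l = k) (hx : x ⬝ᵥ z = 0) :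
    hA.eigvecAsc k ⬝ᵥ x = 0 := by
  have hzz := hA.dotProduct_eq_mul_of_eigAsc_eq_imp h hk z
  rw [hA.dotProduct_eq_mul_of_eigAsc_eq_imp h hk x] at hx
  refine (mul_eq_zero.mp hx).resolve_right fun h0 => hz (dotProduct_self_eq_zero.mp ?_)
  rw [hzz, h0, mul_zero]

lemma le_dotProduct_mulVec_of_eigvecAsc_dotProduct_eq_zero {x : Fin n → ℝ} {m : Fin n}
    {μ : ℝ} (hμ : ∀ k, m < k → μ ≤ eigAsc hA k) (hx : ∀ k < m, hA.eigvecAsc k ⬝ᵥ x = 0) :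
    eigAsc hA m * (hA.eigvecAsc m ⬝ᵥ x) ^ 2 + μ * (x ⬝ᵥ x - (hA.eigvecAsc m ⬝ᵥ x) ^ 2) ≤
      x ⬝ᵥ A *ᵥ x := by
  set p := fun k => hA.eigvecAsc k ⬝ᵥ x
  have hxx : x ⬝ᵥ x = p m ^ 2 + ∑ k ∈ Finset.univ.erase m, p k ^ 2 := by
    rw [hA.dotProduct_eq_sum_eigvecAsc, ← Finset.add_sum_erase _ _ (Finset.mem_univ m)]
    simp only [p, sq]
  have htail : μ * ∑ k ∈ Finset.univ.erase m, p k ^ 2 ≤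
      ∑ k ∈ Finset.univ.erase m, eigAsc hA k * p k ^ 2 := by
    rw [Finset.mul_sum]
    refine Finset.sum_le_sum fun k hk => ?_
    rcases lt_or_gt_of_ne (Finset.ne_of_mem_erase hk) with hlt | hgt
    · simp [p, hx k hlt]
    · exact mul_le_mul_of_nonneg_right (hμ k hgt) (sq_nonneg _)
  rw [hA.dotProduct_mulVec_eq_sum_eigAsc, ← Finset.add_sum_erase _ _ (Finset.mem_univ m), hxx]
  linarith

lemma eq_zero_of_eigAsc_lt_eigAsc_one (hn : 1 < n) {l : Fin n}
    (hl : eigAsc hA l < eigAsc hA ⟨1, hn⟩) : l = ⟨0, by omega⟩ := by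
  by_contra hne
  have h1l : (⟨1, hn⟩ : Fin n) ≤ l :=
    Fin.le_def.mpr (Nat.one_le_iff_ne_zero.mpr fun h => hne (Fin.ext h))
  exact (hA.monotone_eigAsc h1l).not_gt hl

lemma le_dotProduct_mulVec_of_dotProduct_eq_zero (hn : 2 < n)
    (h01 : eigAsc hA ⟨0, by omega⟩ < eigAsc hA ⟨1, by omega⟩)
    (h12 : eigAsc hA ⟨1, by omega⟩ < eigAsc hA ⟨2, by omega⟩) {z v u : Fin n → ℝ}
    (hz0 : z ≠ 0) (hz : A *ᵥ z = eigAsc hA ⟨0, by omega⟩ • z) (hv : v ⬝ᵥ v = 1)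
    (hev : A *ᵥ v = eigAsc hA ⟨1, by omega⟩ • v) (hu : u ⬝ᵥ z = 0) :
    eigAsc hA ⟨1, by omega⟩ * (u ⬝ᵥ v) ^ 2 +
      eigAsc hA ⟨2, by omega⟩ * (u ⬝ᵥ u - (u ⬝ᵥ v) ^ 2) ≤ u ⬝ᵥ A *ᵥ u := by
  have hmono := hA.monotone_eigAsc
  have simple0 : ∀ l, eigAsc hA l = eigAsc hA ⟨0, by omega⟩ → l = ⟨0, by omega⟩ :=
    fun l hl => hA.eq_zero_of_eigAsc_lt_eigAsc_one (by omega) (hl ▸ h01)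
  have simple1 : ∀ l, eigAsc hA l = eigAsc hA ⟨1, by omega⟩ → l = ⟨1, by omega⟩ := by
    intro l hl
    by_contra hne
    have hne' : l.val ≠ 1 := fun h => hne (Fin.ext h)
    rcases Nat.lt_or_ge l.val 2 with h | h
    · rw [show l = ⟨0, by omega⟩ from Fin.ext (by simp only; omega)] at hl
      linarith
    · linarith [hmono (show (⟨2, by omega⟩ : Fin n) ≤ l from Fin.le_def.mpr h)]
  have hp0 := hA.eigvecAsc_dotProduct_eq_zero hz0 hz simple0 hu
  have hv1 : (hA.eigvecAsc ⟨1, by omega⟩ ⬝ᵥ v) ^ 2 = 1 := by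
    rw [sq, ← hA.dotProduct_eq_mul_of_eigAsc_eq_imp hev simple1 v, hv]
  have hsq : (u ⬝ᵥ v) ^ 2 = (hA.eigvecAsc ⟨1, by omega⟩ ⬝ᵥ u) ^ 2 := by
    rw [hA.dotProduct_eq_mul_of_eigAsc_eq_imp hev simple1 u, mul_pow, hv1, mul_one]
  rw [hsq]
  refine hA.le_dotProduct_mulVec_of_eigvecAsc_dotProduct_eq_zero (fun k hk => hmono hk) ?_
  intro k hk
  rwa [show k = ⟨0, by omega⟩ from Fin.ext (Nat.lt_one_iff.mp hk)]

end Matrix.IsHermitian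

namespace Matrix.PosSemidef

variable {n : ℕ} {A B : Matrix (Fin n) (Fin n) ℝ}

lemma eigAsc_zero_eq_zero (hA : A.PosSemidef) (hn : 0 < n) {z : Fin n → ℝ} (hz0 : z ≠ 0)
    (hz : A *ᵥ z = 0) : eigAsc hA.1 ⟨0, hn⟩ = 0 := by
  obtain ⟨k, hk⟩ := hA.1.exists_eigAsc_eq_of_mulVec_eq_smul hz0 (c := 0) (by rw [hz, zero_smul])
  exact le_antisymm ((hA.1.monotone_eigAsc (Fin.le_def.mpr (Nat.zero_le _))).trans hk.le)
    (hA.eigenvalues_nonneg _)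

lemma mulVec_eq_zero_of_add_mulVec_eq_zero (hA : A.PosSemidef) (hB : B.PosSemidef)
    {z : Fin n → ℝ} (h : (A + B) *ᵥ z = 0) : A *ᵥ z = 0 := by
  rw [← hA.dotProduct_mulVec_zero_iff]
  have h0 : star z ⬝ᵥ (A + B) *ᵥ z = 0 := by rw [h, dotProduct_zero]
  rw [add_mulVec, dotProduct_add] at h0
  linarith [hA.dotProduct_mulVec_nonneg z, hB.dotProduct_mulVec_nonneg z]

/-- The kernel of `A + B` lies in that of `A`, which is at most one-dimensional. -/
lemma eigAsc_one_pos_add (hA : A.PosSemidef) (hB : B.PosSemidef) (hAB : (A + B).IsHermitian)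
    (hn : 1 < n) (hpos : 0 < eigAsc hA.1 ⟨1, hn⟩) : 0 < eigAsc hAB ⟨1, hn⟩ := by
  have hnn : ∀ k, 0 ≤ eigAsc hAB k := fun k => (hA.add hB).eigenvalues_nonneg _
  refine (hnn _).lt_of_ne fun h1 => ?_
  have h0 : eigAsc hAB ⟨0, by omega⟩ = 0 :=
    le_antisymm ((hAB.monotone_eigAsc (Fin.le_def.mpr zero_le_one)).trans h1.ge) (hnn _)
  have hker : ∀ k, eigAsc hAB k = 0 → A *ᵥ hAB.eigvecAsc k = (0 : ℝ) • hAB.eigvecAsc k := by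
    intro k hk
    rw [zero_smul]
    exact hA.mulVec_eq_zero_of_add_mulVec_eq_zero hB (by rw [hAB.mulVec_eigvecAsc, hk, zero_smul])
  have := hA.1.sq_dotProduct_eq_of_eigAsc_eq_imp (hker _ h0) (hker _ h1.symm)
    fun l hl => hA.1.eq_zero_of_eigAsc_lt_eigAsc_one hn (hl.trans_lt hpos)
  simp [IsHermitian.eigvecAsc_dotProduct_eigvecAsc, Fin.ext_iff] at this

end Matrix.PosSemidef

section RankOneUpdate

variable {ι : Type*} [Fintype ι]

lemma add_vecMulVec_self_mulVec (A : Matrix ι ι ℝ) (a x : ι → ℝ) :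
    (A + vecMulVec a a) *ᵥ x = A *ᵥ x + (a ⬝ᵥ x) • a := by
  rw [add_mulVec, vecMulVec_mulVec, op_smul_eq_smul]

lemma dotProduct_add_vecMulVec_self_mulVec (A : Matrix ι ι ℝ) (a x : ι → ℝ) :
    x ⬝ᵥ (A + vecMulVec a a) *ᵥ x = x ⬝ᵥ A *ᵥ x + (a ⬝ᵥ x) ^ 2 := by
  rw [add_vecMulVec_self_mulVec, dotProduct_add, dotProduct_smul, smul_eq_mul,
    dotProduct_comm x a, sq]

lemma single_sub_single_dotProduct [DecidableEq ι] (i j : ι) (x : ι → ℝ) :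
    (Pi.single i 1 - Pi.single j 1) ⬝ᵥ x = x i - x j := by
  rw [sub_dotProduct, single_dotProduct, single_dotProduct, one_mul, one_mul]

/-- Cauchy–Schwarz for `a` against the component of `v` orthogonal to `u`. -/
lemma sq_dotProduct_sub_mul_le {u v : ι → ℝ} (a : ι → ℝ) (hu : u ⬝ᵥ u = 1) (hv : v ⬝ᵥ v = 1) :
    (a ⬝ᵥ v - (u ⬝ᵥ v) * (a ⬝ᵥ u)) ^ 2 ≤ (a ⬝ᵥ a) * (1 - (u ⬝ᵥ v) ^ 2) := by
  set w := v - (u ⬝ᵥ v) • u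
  have haw : a ⬝ᵥ w = a ⬝ᵥ v - (u ⬝ᵥ v) * (a ⬝ᵥ u) := by
    rw [dotProduct_sub, dotProduct_smul, smul_eq_mul]
  have hww : w ⬝ᵥ w = 1 - (u ⬝ᵥ v) ^ 2 := by
    simp only [w, sub_dotProduct, dotProduct_sub, smul_dotProduct, dotProduct_smul, smul_eq_mul,
      hu, hv, dotProduct_comm v u]
    ring
  rw [← haw, ← hww]
  simpa only [dotProduct, sq] using Finset.sum_mul_sq_le_sq_mul_sq Finset.univ a w

end RankOneUpdate

lemma sq_div_le_of_gap {g c s t δ : ℝ} (hg : 0 < g) (hcs : (t - c * s) ^ 2 ≤ 2 * (1 - c ^ 2))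
    (hδ : g * (1 - c ^ 2) + s ^ 2 ≤ δ) : t ^ 2 / (6 / g + 1) ≤ δ := by
  have hc : c ^ 2 ≤ 1 := by nlinarith [sq_nonneg (t - c * s)]
  have hδ0 : 0 ≤ δ := by nlinarith [sq_nonneg s]
  have key : g * t ^ 2 ≤ (g + 2) * δ := by
    set r := t - c * s
    have ht : t = c * s + r := by ring
    have hX : 0 ≤ s ^ 2 + g * (1 - c ^ 2) := by nlinarith [sq_nonneg s]
    nlinarith [sq_nonneg (g * c * r - 2 * s),
      mul_nonneg (by positivity : (0 : ℝ) ≤ g ^ 2 * c ^ 2 + 2 * g)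
        (by linarith : 0 ≤ 2 * (1 - c ^ 2) - r ^ 2),
      mul_nonneg (by nlinarith : 0 ≤ g * (1 - c ^ 2)) hX,
      mul_nonneg (by linarith : (0 : ℝ) ≤ g + 2)
        (by linarith : 0 ≤ δ - (s ^ 2 + g * (1 - c ^ 2)))]
  rw [div_le_iff₀ (by positivity)]
  have : (6 / g + 1) * g = 6 + g := by field_simp
  nlinarith

/-- Proposition 1: lower bound on the increase of algebraic connectivity caused by
adding a single edge `a = e_i - e_j` to the Laplacian `L`. -/
theorem stmt0 {n : ℕ} (hn : 3 ≤ n) (L : Matrix (Fin n) (Fin n) ℝ)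
    (hL : L.PosSemidef)
    (hL1 : L.mulVec (fun _ => 1) = 0)
    (i j : Fin n) (hij : i ≠ j)
    (a : Fin n → ℝ) (ha : a = Pi.single i 1 - Pi.single j 1)
    (hL' : (L + Matrix.vecMulVec a a).IsHermitian)
    (hpos : 0 < eigAsc hL.1 ⟨1, by omega⟩)
    (hgap : eigAsc hL.1 ⟨1, by omega⟩ < eigAsc hL.1 ⟨2, by omega⟩)
    (v : Fin n → ℝ) (hv : v ⬝ᵥ v = 1)
    (hev : L.mulVec v = eigAsc hL.1 ⟨1, by omega⟩ • v) :
    eigAsc hL' ⟨1, by omega⟩ - eigAsc hL.1 ⟨1, by omega⟩ ≥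
      (a ⬝ᵥ v) ^ 2 /
        (6 / (eigAsc hL.1 ⟨2, by omega⟩ - eigAsc hL.1 ⟨1, by omega⟩) + 1) := by
  have haa : a ⬝ᵥ a = 2 := by
    rw [ha, single_sub_single_dotProduct]
    simp [hij, hij.symm]
    norm_num
  have ha1 : a ⬝ᵥ (fun _ => 1) = 0 := by rw [ha, single_sub_single_dotProduct, sub_self]
  have h1 : (fun _ : Fin n => (1 : ℝ)) ≠ 0 := fun h => one_ne_zero (congrFun h ⟨0, by omega⟩)
  have hzero := hL.eigAsc_zero_eq_zero (by omega) h1 hL1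
  have hθ := hL.eigAsc_one_pos_add (by simpa using posSemidef_vecMulVec_self_star a) hL'
    (by omega) hpos
  set u := hL'.eigvecAsc ⟨1, by omega⟩
  have huu : u ⬝ᵥ u = 1 := by simp [u, IsHermitian.eigvecAsc_dotProduct_eigvecAsc]
  have hu1 : u ⬝ᵥ (fun _ => 1) = 0 :=
    hL'.dotProduct_eq_zero_of_mulVec_eq_smul (hL'.mulVec_eigvecAsc _)
      (by rw [add_vecMulVec_self_mulVec, hL1, ha1, zero_smul, add_zero, zero_smul]) hθ.ne'
  have hθu : eigAsc hL' ⟨1, by omega⟩ = u ⬝ᵥ L *ᵥ u + (a ⬝ᵥ u) ^ 2 := by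
    rw [← dotProduct_add_vecMulVec_self_mulVec, hL'.mulVec_eigvecAsc, dotProduct_smul, huu,
      smul_eq_mul, mul_one]
  have hLu := hL.1.le_dotProduct_mulVec_of_dotProduct_eq_zero hn (by rwa [hzero]) hgap h1
    (by rw [hL1, hzero, zero_smul]) hv hev hu1
  have hcs := sq_dotProduct_sub_mul_le a huu hv
  rw [haa] at hcs
  rw [huu] at hLu
  exact sq_div_le_of_gap (sub_pos.mpr hgap) hcs (by linarith)
end

section
/- Let s ≤ t be integers and let P_s, P_{s+1}, …, P_t be doubly stochastic real n×n matrices. Let Φ(t,s) = P_t P_{t−1} ⋯ P_s. Then ‖Φ(t,s) − J‖ ≤ ∏_{i=s}^{t} ‖P_i − J‖. -/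
open Matrix

/-!
Every doubly stochastic `P` satisfies `P * J = J * P = J`, and `J * J = J`. Hence
`P * Q - J = (P - J) * (Q - J)` for doubly stochastic `P`, `Q`, and since doubly stochastic
matrices form a monoid, `Φ(t,s) - J` factors as the product of the `P i - J`. The bound is
then submultiplicativity of the operator norm.
-/

theorem mul_sub_eq_sub_mul_sub {R : Type*} [Ring R] {a b e : R}
    (ha : a * e = e) (hb : e * b = e) (he : e * e = e) :
    a * b - e = (a - e) * (b - e) := by
  rw [sub_mul, mul_sub, mul_sub, ha, hb, he]
  abel

theorem Finset.prod_range_tsub_eq_prod_Icc {M : Type*} [CommMonoid M] (f : ℕ → M) {s t : ℕ}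
    (hst : s ≤ t) : ∏ k ∈ Finset.range (t - s + 1), f (t - k) = ∏ i ∈ Finset.Icc s t, f i := by
  rw [Finset.range_eq_Ico, Finset.prod_Ico_reflect f 0 (show t - s + 1 ≤ t + 1 by omega),
    Nat.sub_zero, show t + 1 - (t - s + 1) = s by omega, Finset.Ico_add_one_right_eq_Icc]

theorem List.prod_map_range {M : Type*} [CommMonoid M] (f : ℕ → M) (m : ℕ) :
    ((List.range m).map f).prod = ∏ k ∈ Finset.range m, f k := by
  rw [Finset.prod_eq_multiset_prod, Finset.range_val, ← Multiset.coe_range, Multiset.map_coe,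
    Multiset.prod_coe]

open scoped Matrix.Norms.L2Operator

section

variable {n : ℕ}

theorem specNorm_eq_l2_opNorm (M : Matrix (Fin n) (Fin n) ℝ) : specNorm M = ‖M‖ :=
  l2_opNorm_toEuclideanCLM M

theorem doublyStochastic_iff_mem_doublyStochastic {M : Matrix (Fin n) (Fin n) ℝ} :
    DoublyStochastic M ↔ M ∈ doublyStochastic ℝ (Fin n) :=
  mem_doublyStochastic_iff_sum.symm

theorem mul_Jmat_of_mem_doublyStochastic {M : Matrix (Fin n) (Fin n) ℝ}
    (hM : M ∈ doublyStochastic ℝ (Fin n)) : M * Jmat n = Jmat n := by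
  ext i j
  simp only [Jmat, mul_apply, of_apply, ← Finset.sum_mul, sum_row_of_mem_doublyStochastic hM,
    one_mul]

theorem Jmat_mul_of_mem_doublyStochastic {M : Matrix (Fin n) (Fin n) ℝ}
    (hM : M ∈ doublyStochastic ℝ (Fin n)) : Jmat n * M = Jmat n := by
  ext i j
  simp only [Jmat, mul_apply, of_apply, ← Finset.mul_sum, sum_col_of_mem_doublyStochastic hM,
    mul_one]

theorem Jmat_mul_Jmat : Jmat n * Jmat n = Jmat n := by
  ext i j
  have hn : (n : ℝ) ≠ 0 := Nat.cast_ne_zero.mpr (Fin.pos i).ne'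
  simp only [Jmat, mul_apply, of_apply, Finset.sum_const, Finset.card_univ, Fintype.card_fin,
    nsmul_eq_mul]
  field_simp

theorem List.prod_sub_Jmat {l : List (Matrix (Fin n) (Fin n) ℝ)} (hl : l ≠ [])
    (hds : ∀ M ∈ l, M ∈ doublyStochastic ℝ (Fin n)) :
    l.prod - Jmat n = (l.map (· - Jmat n)).prod := by
  induction l with
  | nil => exact absurd rfl hl
  | cons a l ih =>
    rcases eq_or_ne l [] with rfl | hl'
    · simp
    have ha := hds a List.mem_cons_self
    have hl_ds : ∀ M ∈ l, M ∈ doublyStochastic ℝ (Fin n) := fun M hM ↦ hds M (.tail a hM)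
    rw [List.prod_cons, mul_sub_eq_sub_mul_sub (mul_Jmat_of_mem_doublyStochastic ha)
      (Jmat_mul_of_mem_doublyStochastic (Submonoid.list_prod_mem _ hl_ds)) Jmat_mul_Jmat,
      ih hl' hl_ds, List.map_cons, List.prod_cons]

theorem List.norm_prod_sub_Jmat_le {l : List (Matrix (Fin n) (Fin n) ℝ)} (hl : l ≠ [])
    (hds : ∀ M ∈ l, M ∈ doublyStochastic ℝ (Fin n)) :
    ‖l.prod - Jmat n‖ ≤ (l.map (‖· - Jmat n‖)).prod := by
  rw [l.prod_sub_Jmat hl hds]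
  simpa [List.map_map, Function.comp_def] using
    List.norm_prod_le' (l := l.map (· - Jmat n)) (by simpa using hl)

end

/-- Lemma 1: the deflated spectral norm of a product of doubly stochastic matrices
is at most the product of the individual deflated spectral norms. -/
theorem stmt2 {n : ℕ} (s t : ℕ) (hst : s ≤ t)
    (P : ℕ → Matrix (Fin n) (Fin n) ℝ)
    (hP : ∀ i, s ≤ i → i ≤ t → DoublyStochastic (P i))
    (Φ : Matrix (Fin n) (Fin n) ℝ)
    (hΦ : Φ = ((List.range (t - s + 1)).map (fun k => P (t - k))).prod) :
    specNorm (Φ - Jmat n) ≤ ∏ i ∈ Finset.Icc s t, specNorm (P i - Jmat n) := by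
  have hds : ∀ M ∈ (List.range (t - s + 1)).map (fun k => P (t - k)),
      M ∈ doublyStochastic ℝ (Fin n) := by
    simp only [List.mem_map, List.mem_range]
    rintro _ ⟨k, hk, rfl⟩
    exact doublyStochastic_iff_mem_doublyStochastic.mp (hP _ (by omega) (by omega))
  simp only [specNorm_eq_l2_opNorm]
  calc ‖Φ - Jmat n‖
      ≤ (((List.range (t - s + 1)).map (fun k => P (t - k))).map (‖· - Jmat n‖)).prod :=
        hΦ ▸ List.norm_prod_sub_Jmat_le (by simp) hds
    _ = ∏ i ∈ Finset.Icc s t, ‖P i - Jmat n‖ := by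
        rw [List.map_map, List.prod_map_range, Function.comp_def,
          Finset.prod_range_tsub_eq_prod_Icc (fun i ↦ ‖P i - Jmat n‖) hst]
end

section
/- Let σ₀ ∈ (0,1), set c = log(1/σ₀), and let A ∈ ℝ. Let g, ĝ : ℕ₊ → [0, σ₀) be two nondecreasing sequences with g(k) ≥ ĝ(k) for every positive integer k. Define β(δ) = ∏_{k=1}^{δ−1} (1 − g(k)/σ₀) and β̂(δ) = ∏_{k=1}^{δ−1} (1 − ĝ(k)/σ₀) (empty products equal 1). Let δ* be the least positive integer satisfying δ ≥ (A − log(1/β(δ)))/c, and let δ̂* be the least positive integer satisfying δ ≥ (A − log(1/β̂(δ)))/c (both exist, since every positive integer δ ≥ A/c is feasible for either constraint). Then δ* ≤ δ̂*. -/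
/-!
A larger gain makes every factor `1 - g k / σ₀` smaller, so `β ≤ β̂` pointwise. Since `c > 0`,
this weakens the constraint, so every horizon feasible for `ĝ` is feasible for `g`, and the least
element of the larger feasible set is no larger.
-/

open Finset Real

section ProdOneSubDiv

variable {ι : Type*} {s : Finset ι} {f f' : ι → ℝ} {σ : ℝ}

lemma prod_one_sub_div_pos (hσ : 0 < σ) (hf : ∀ k ∈ s, f k < σ) :
    0 < ∏ k ∈ s, (1 - f k / σ) :=
  prod_pos fun k hk => sub_pos.2 ((div_lt_one hσ).2 (hf k hk))

lemma prod_one_sub_div_le_prod (hσ : 0 < σ) (hf : ∀ k ∈ s, f k < σ)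
    (hff' : ∀ k ∈ s, f' k ≤ f k) :
    ∏ k ∈ s, (1 - f k / σ) ≤ ∏ k ∈ s, (1 - f' k / σ) :=
  prod_le_prod (fun k hk => (sub_pos.2 ((div_lt_one hσ).2 (hf k hk))).le)
    fun k hk => by gcongr; exact hff' k hk

end ProdOneSubDiv

-- The feasible set of the paper's optimization problem (39).
def feasibleMixingTimes (A c : ℝ) (β : ℕ → ℝ) : Set ℕ :=
  {δ | 0 < δ ∧ (δ : ℝ) ≥ (A - log (1 / β δ)) / c}

lemma feasibleMixingTimes_subset {A c : ℝ} {β β' : ℕ → ℝ} (hc : 0 ≤ c)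
    (hβ : ∀ δ, 0 < β δ) (hββ' : ∀ δ, β δ ≤ β' δ) :
    feasibleMixingTimes A c β' ⊆ feasibleMixingTimes A c β := by
  rintro δ ⟨hδ, hfeas⟩
  refine ⟨hδ, le_trans ?_ hfeas⟩
  have hlog : log (1 / β' δ) ≤ log (1 / β δ) :=
    log_le_log (one_div_pos.2 ((hβ δ).trans_le (hββ' δ)))
      (one_div_le_one_div_of_le (hβ δ) (hββ' δ))
  gcongr

theorem stmt10_general (σ₀ : ℝ) (hσ : σ₀ ∈ Set.Ioo (0 : ℝ) 1) (c A : ℝ)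
    (hc : c = Real.log (1 / σ₀))
    (g g' : ℕ → ℝ)
    (hg : ∀ k, 1 ≤ k → g k ∈ Set.Ico 0 σ₀)
    (hdom : ∀ k, 1 ≤ k → g' k ≤ g k)
    (β β' : ℕ → ℝ)
    (hβ : ∀ δ, β δ = ∏ k ∈ Finset.Icc 1 (δ - 1), (1 - g k / σ₀))
    (hβ' : ∀ δ, β' δ = ∏ k ∈ Finset.Icc 1 (δ - 1), (1 - g' k / σ₀))
    (δstar δ'star : ℕ)
    (h1 : IsLeast {δ : ℕ | 0 < δ ∧ (δ : ℝ) ≥ (A - Real.log (1 / β δ)) / c} δstar)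
    (h2 : IsLeast {δ : ℕ | 0 < δ ∧ (δ : ℝ) ≥ (A - Real.log (1 / β' δ)) / c} δ'star) :
    δstar ≤ δ'star := by
  obtain ⟨hσ0, hσ1⟩ := hσ
  have hc0 : 0 ≤ c := hc ▸ (log_pos (one_lt_one_div hσ0 hσ1)).le
  have hg_lt : ∀ δ, ∀ k ∈ Icc 1 (δ - 1), g k < σ₀ := fun δ k hk => (hg k (mem_Icc.1 hk).1).2
  have hβ_pos : ∀ δ, 0 < β δ := fun δ => hβ δ ▸ prod_one_sub_div_pos hσ0 (hg_lt δ)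
  have hββ' : ∀ δ, β δ ≤ β' δ := fun δ => hβ δ ▸ hβ' δ ▸
    prod_one_sub_div_le_prod hσ0 (hg_lt δ) fun k hk => hdom k (mem_Icc.1 hk).1
  exact h2.mono h1 (feasibleMixingTimes_subset hc0 hβ_pos hββ')

/-- Corollary 3: scheduling edges earlier (a pointwise larger cumulative
connectivity gain `g ≥ ĝ`) yields a smaller optimal mixing time `δ* ≤ δ̂*`. -/
theorem stmt10 (σ₀ : ℝ) (hσ : σ₀ ∈ Set.Ioo (0 : ℝ) 1) (c A : ℝ)
    (hc : c = Real.log (1 / σ₀))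
    (g g' : ℕ → ℝ)
    (hg : ∀ k, 1 ≤ k → g k ∈ Set.Ico 0 σ₀) (hg' : ∀ k, 1 ≤ k → g' k ∈ Set.Ico 0 σ₀)
    (hgmono : ∀ k k', 1 ≤ k → k ≤ k' → g k ≤ g k')
    (hg'mono : ∀ k k', 1 ≤ k → k ≤ k' → g' k ≤ g' k')
    (hdom : ∀ k, 1 ≤ k → g' k ≤ g k)
    (β β' : ℕ → ℝ)
    (hβ : ∀ δ, β δ = ∏ k ∈ Finset.Icc 1 (δ - 1), (1 - g k / σ₀))
    (hβ' : ∀ δ, β' δ = ∏ k ∈ Finset.Icc 1 (δ - 1), (1 - g' k / σ₀))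
    (δstar δ'star : ℕ)
    (h1 : IsLeast {δ : ℕ | 0 < δ ∧ (δ : ℝ) ≥ (A - Real.log (1 / β δ)) / c} δstar)
    (h2 : IsLeast {δ : ℕ | 0 < δ ∧ (δ : ℝ) ≥ (A - Real.log (1 / β' δ)) / c} δ'star) :
    δstar ≤ δ'star :=
  stmt10_general σ₀ hσ c A hc g g' hg hdom β β' hβ hβ' δstar δ'star h1 h2
end

section
/- Let K ≥ 1 be an integer, v ∈ ℝ^K, and let k be an integer with 0 ≤ k ≤ K. Define clip(x) = min(1, max(0, x)). Suppose μ ∈ ℝ satisfies Σ_{l=1}^{K} clip(v_l − μ) = k, and define w* ∈ ℝ^K by w*_l = clip(v_l − μ). Then for every w ∈ ℝ^K with 0 ≤ w_l ≤ 1 for all l and Σ_{l=1}^{K} w_l = k, one has ‖w* − v‖₂ ≤ ‖w − v‖₂; that is, w* is the Euclidean projection of v onto the set {w ∈ [0,1]^K : 𝟙ᵀw = k}. -/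
/-- Projection formula (26)-(27): clipping `v - μ𝟙` elementwise, with `μ` chosen so
the coordinates sum to `k`, yields the Euclidean projection of `v` onto
`{w ∈ [0,1]^K : 𝟙ᵀw = k}`. -/
theorem stmt16 {K : ℕ} (hK : 1 ≤ K) (v : Fin K → ℝ) (k : ℕ) (hk : k ≤ K)
    (clip : ℝ → ℝ) (hclip : ∀ x, clip x = min 1 (max 0 x))
    (μ : ℝ) (hμ : ∑ l, clip (v l - μ) = (k : ℝ))
    (wstar : Fin K → ℝ) (hwstar : ∀ l, wstar l = clip (v l - μ)) :
    ∀ w : Fin K → ℝ, (∀ l, 0 ≤ w l ∧ w l ≤ 1) → ∑ l, w l = (k : ℝ) →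
      Real.sqrt (∑ l, (wstar l - v l) ^ 2) ≤ Real.sqrt (∑ l, (w l - v l) ^ 2) := by
  intro w hw hsum
  apply Real.sqrt_le_sqrt
  -- cross term sum is nonneg plus μ * 0
  have hzero : ∑ l, (w l - wstar l) = 0 := by
    rw [Finset.sum_sub_distrib, hsum]
    have : ∑ l, wstar l = (k : ℝ) := by
      rw [← hμ]; exact Finset.sum_congr rfl fun l _ => hwstar l
    rw [this]; ring
  have hcross : 0 ≤ ∑ l, (wstar l - v l) * (w l - wstar l) := by
    have key : ∀ l, (wstar l - v l) * (w l - wstar l)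
        = (clip (v l - μ) - (v l - μ)) * (w l - wstar l) - μ * (w l - wstar l) := by
      intro l; rw [hwstar l]; ring
    have h1 : 0 ≤ ∑ l, (clip (v l - μ) - (v l - μ)) * (w l - wstar l) := by
      apply Finset.sum_nonneg
      intro l _
      set t := v l - μ with ht
      rw [hclip t, hwstar l, hclip t]
      rcases le_or_gt t 0 with h | h
      · have hc : min 1 (max 0 t) = 0 := by
          rw [max_eq_left h, min_eq_right zero_le_one]
        rw [hc]
        exact mul_nonneg (by linarith) (by simpa using (hw l).1)
      · rcases le_or_gt t 1 with h2 | h2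
        · have hc : min 1 (max 0 t) = t := by
            rw [max_eq_right h.le, min_eq_right h2]
          rw [hc]; simp
        · have hc : min 1 (max 0 t) = 1 := by
            rw [max_eq_right h.le, min_eq_left h2.le]
          rw [hc]
          nlinarith [(hw l).2]
    calc (0:ℝ) ≤ ∑ l, (clip (v l - μ) - (v l - μ)) * (w l - wstar l) - μ * 0 := by
          simpa using h1
      _ = ∑ l, (wstar l - v l) * (w l - wstar l) := by
          rw [← hzero, Finset.mul_sum, ← Finset.sum_sub_distrib]
          exact Finset.sum_congr rfl fun l _ => (key l).symm
  have expand : ∀ l, (w l - v l) ^ 2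
      = (wstar l - v l) ^ 2 + 2 * ((wstar l - v l) * (w l - wstar l)) + (w l - wstar l) ^ 2 := by
    intro l; ring
  have : ∑ l, (w l - v l) ^ 2 = ∑ l, (wstar l - v l) ^ 2
      + 2 * ∑ l, (wstar l - v l) * (w l - wstar l) + ∑ l, (w l - wstar l) ^ 2 := by
    simp_rw [expand, Finset.sum_add_distrib, Finset.mul_sum]
  have hsq : 0 ≤ ∑ l, (w l - wstar l) ^ 2 :=
    Finset.sum_nonneg fun l _ => sq_nonneg _
  linarith
end
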